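/- arXiv:2503.24004 — 3 statements merged into one kernel-verified Lean document; each statement's English description precedes it below -/
import Mathlib

section
/- Let (P₁,…,P_J) be a multivariate species sampling process with non-atomic base measure P₀, and let X be a sample from (P₁,…,P_J). Then for every j ∈ {1,…,J} and every Borel set A ⊆ 𝕏: E[P_j(A)] = P₀(A), and Var[P_j(A)] = ℙ(X_{j,1} = X_{j,2}) · P₀(A) · (1 − P₀(A)). -/
open MeasureTheory ProbabilityTheory
open scoped ENNReal

namespace MSSP

variable {Ω : Type*} [MeasurableSpace Ω] {𝕏 : Type*} [MeasurableSpace 𝕏]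

/-- The species-sampling mixture measure `∑ₕ wₕ δ_{aₕ} + (1 - ∑ₕ wₕ) P₀`. -/
noncomputable def mixM (P₀ : Measure 𝕏) (w : ℕ → ℝ) (a : ℕ → 𝕏) : Measure 𝕏 :=
  Measure.sum (fun h => ENNReal.ofReal (w h) • Measure.dirac (a h)) +
    ENNReal.ofReal (1 - ∑' h, w h) • P₀

/-- `(P j)_{j}` is a multivariate species sampling process with base measure `P₀`,
weight array `π` and atoms `θ`. -/
structure IsMSSPwith {ι : Type*} (Pr : Measure Ω) (P₀ : Measure 𝕏)
    (P : ι → Ω → Measure 𝕏) (π : ι → ℕ → Ω → ℝ) (θ : ℕ → Ω → 𝕏) : Prop where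
  measP : ∀ j (A : Set 𝕏), MeasurableSet A → Measurable fun ω => P j ω A
  probP : ∀ j ω, IsProbabilityMeasure (P j ω)
  measπ : ∀ j h, Measurable (π j h)
  subprob : ∀ j, ∀ᵐ ω ∂Pr, (∀ h, 0 ≤ π j h ω ∧ π j h ω ≤ 1) ∧ ∑' h, π j h ω ≤ 1
  measθ : ∀ h, Measurable (θ h)
  lawθ : ∀ h, Measure.map (θ h) Pr = P₀
  iidθ : iIndepFun (m := fun _ : ℕ => ‹MeasurableSpace 𝕏›) θ Pr
  indepθπ : IndepFun (fun ω (h : ℕ) => θ h ω) (fun ω (j : ι) (h : ℕ) => π j h ω) Pr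
  repr : ∀ j, ∀ᵐ ω ∂Pr, P j ω = mixM P₀ (fun h => π j h ω) (fun h => θ h ω)

/-- `(P j)_j` is a multivariate species sampling process with base measure `P₀`. -/
def IsMSSP {ι : Type*} (Pr : Measure Ω) (P₀ : Measure 𝕏)
    (P : ι → Ω → Measure 𝕏) : Prop :=
  ∃ π θ, IsMSSPwith Pr P₀ P π θ

/-- `X` is a sample from the vector of random probability measures `P`:
conditionally on `P` the entries are independent, with `X j i` distributed as `P j`. -/
def IsSample {ι : Type*} (Pr : Measure Ω) (P : ι → Ω → Measure 𝕏)
    (X : ι → ℕ → Ω → 𝕏) : Prop :=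
  (∀ j i, Measurable (X j i)) ∧
  ∀ (s : Finset (ι × ℕ)) (A : ι × ℕ → Set 𝕏), (∀ p ∈ s, MeasurableSet (A p)) →
    Pr {ω | ∀ p ∈ s, X p.1 p.2 ω ∈ A p} = ∫⁻ ω, ∏ p ∈ s, P p.1 ω (A p) ∂Pr

/-- Covariance of two real random variables. -/
noncomputable def covR (Pr : Measure Ω) (f g : Ω → ℝ) : ℝ :=
  ∫ ω, f ω * g ω ∂Pr - (∫ ω, f ω ∂Pr) * (∫ ω, g ω ∂Pr)

/-- Correlation of two real random variables. -/
noncomputable def corrR (Pr : Measure Ω) (f g : Ω → ℝ) : ℝ :=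
  covR Pr f g / (Real.sqrt (variance f Pr) * Real.sqrt (variance g Pr))


/-!
Write `P_j = ∑ₕ wₕ δ_{θₕ} + (1 - ∑ₕ wₕ) P₀` with `wₕ = π_{j,h}`. Expanding `P_j ⊗ P_j` and using
that the atoms are `P₀`-distributed, pairwise independent and independent of the weights, every
term integrates to a weight moment times `(P₀ ⊗ P₀)(S)`, except those of the diagonal atom pairs
`(θₕ, θₕ)`, which see the image `Δ_* P₀` of `P₀` under `Δ x = (x, x)`. The weight moments sum to
one because `P_j ⊗ P_j` has mass one, so with `ρ = ∑ₕ E[wₕ²]`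
  `E[(P_j ⊗ P_j)(S)] + ρ (P₀ ⊗ P₀)(S) = ρ (Δ_* P₀)(S) + (P₀ ⊗ P₀)(S)`.
Taking `S = A × 𝕏` gives the mean and `S = A × A` the second moment. The diagonal is
`P₀ ⊗ P₀`-null since `P₀` has no atoms, and its `P_j ⊗ P_j`-mass is the tie probability of a
sample, so `S = Δ(𝕏)` gives `ℙ(X_{j,1} = X_{j,2}) = ρ`.
-/

lemma mixM_prod_apply (P₀ : Measure 𝕏) [SFinite P₀] (w : ℕ → ℝ) (a : ℕ → 𝕏)
    {S : Set (𝕏 × 𝕏)} (hS : MeasurableSet S) :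
    (mixM P₀ w a).prod (mixM P₀ w a) S =
      ∑' h, ∑' k, ENNReal.ofReal (w h) * ENNReal.ofReal (w k) * Measure.dirac (a h, a k) S
      + ∑' h, ENNReal.ofReal (1 - ∑' i, w i) * ENNReal.ofReal (w h) * P₀ (Prod.mk (a h) ⁻¹' S)
      + ∑' h, ENNReal.ofReal (w h) * ENNReal.ofReal (1 - ∑' i, w i)
          * P₀ ((fun x => (x, a h)) ⁻¹' S)
      + ENNReal.ofReal (1 - ∑' i, w i) * ENNReal.ofReal (1 - ∑' i, w i) * (P₀.prod P₀) S := by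
  rw [mixM, Measure.add_prod, Measure.prod_add, Measure.prod_add, Measure.prod_sum,
    Measure.prod_sum_left, Measure.prod_sum_right]
  simp only [Measure.prod_smul_left, Measure.prod_smul_right, Measure.dirac_prod_dirac,
    Measure.dirac_prod (ν := P₀), Measure.prod_dirac (μ := P₀), Measure.add_apply,
    Measure.sum_apply _ hS, Measure.smul_apply, smul_eq_mul,
    Measure.map_apply measurable_prodMk_left hS, Measure.map_apply measurable_prodMk_right hS,
    mul_assoc, add_assoc]
  rw [ENNReal.tsum_prod']
  exact congrArg (· + _) (tsum_congr fun h => tsum_congr fun k => mul_left_comm _ _ _)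

lemma _root_.ProbabilityTheory.IndepFun.lintegral_comp_mul_comp {β γ : Type*}
    [MeasurableSpace β] [MeasurableSpace γ] {Pr : Measure Ω} {Y : Ω → β} {Z : Ω → γ}
    (hYZ : IndepFun Y Z Pr) (hY : Measurable Y) (hZ : Measurable Z) {g : β → ℝ≥0∞} {f : γ → ℝ≥0∞}
    (hg : Measurable g) (hf : Measurable f) :
    ∫⁻ ω, g (Y ω) * f (Z ω) ∂Pr = (∫⁻ ω, g (Y ω) ∂Pr) * ∫⁻ ω, f (Z ω) ∂Pr :=
  lintegral_mul_eq_lintegral_mul_lintegral_of_indepFun'' (hg.comp hY).aemeasurable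
    (hf.comp hZ).aemeasurable (hYZ.comp hg hf)

lemma map_pair_eq_ite {Pr : Measure Ω} [IsFiniteMeasure Pr] {P₀ : Measure 𝕏} {θ : ℕ → Ω → 𝕏}
    (hθ : ∀ h, Measurable (θ h)) (hlaw : ∀ h, Pr.map (θ h) = P₀)
    (hpair : Pairwise fun h k => IndepFun (θ h) (θ k) Pr) (h k : ℕ) :
    Pr.map (fun ω => (θ h ω, θ k ω)) =
      if h = k then P₀.map (fun x => (x, x)) else P₀.prod P₀ := by
  split_ifs with hhk
  · subst hhk
    rw [← hlaw h, Measure.map_map (by fun_prop) (hθ h)]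
    rfl
  · calc Pr.map (fun ω => (θ h ω, θ k ω)) = (Pr.map (θ h)).prod (Pr.map (θ k)) :=
          (indepFun_iff_map_prod_eq_prod_map_map (hθ h).aemeasurable (hθ k).aemeasurable).1
            (hpair hhk)
      _ = P₀.prod P₀ := by rw [hlaw, hlaw]

lemma tsum_tsum_mul_ite_add (c : ℕ → ℕ → ℝ≥0∞) (m d q : ℝ≥0∞) :
    ∑' h, ∑' k, c h k * (if h = k then d else q) + m * q + (∑' h, c h h) * q
      = (∑' h, c h h) * d + (∑' h, ∑' k, c h k + m) * q := by
  have hrow : ∀ h, ∑' k, c h k * (if h = k then d else q) + c h h * q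
      = c h h * d + (∑' k, c h k) * q := fun h => by
    calc ∑' k, c h k * (if h = k then d else q) + c h h * q
        = ∑' k, c h k * (if h = k then d else q) + ∑' k, if k = h then c h h * q else 0 := by
          rw [tsum_ite_eq]
      _ = ∑' k, ((if k = h then c h h * d else 0) + c h k * q) := by
          rw [← ENNReal.tsum_add]
          refine tsum_congr fun k => ?_
          by_cases hk : k = h
          · simp [hk]
          · simp [hk, Ne.symm hk]
      _ = c h h * d + (∑' k, c h k) * q := by
          rw [ENNReal.tsum_add, tsum_ite_eq, ENNReal.tsum_mul_right]
  calc ∑' h, ∑' k, c h k * (if h = k then d else q) + m * q + (∑' h, c h h) * q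
      = ∑' h, (∑' k, c h k * (if h = k then d else q) + c h h * q) + m * q := by
        rw [ENNReal.tsum_add, ENNReal.tsum_mul_right]
        ring
    _ = (∑' h, c h h) * d + (∑' h, ∑' k, c h k + m) * q := by
        simp_rw [hrow]
        rw [ENNReal.tsum_add, ENNReal.tsum_mul_right, ENNReal.tsum_mul_right]
        ring

section IndependentAtoms

variable {Pr : Measure Ω} {w : ℕ → Ω → ℝ} {θ : ℕ → Ω → 𝕏}

lemma lintegral_tsum_mul_atom {P₀ : Measure 𝕏} (hw : ∀ h, Measurable (w h))
    (hθ : ∀ h, Measurable (θ h)) (hlaw : ∀ h, Pr.map (θ h) = P₀)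
    (hind : IndepFun (fun ω h => θ h ω) (fun ω h => w h ω) Pr)
    {f : ℕ → (ℕ → ℝ) → ℝ≥0∞} (hf : ∀ h, Measurable (f h)) {g : 𝕏 → ℝ≥0∞} (hg : Measurable g) :
    ∫⁻ ω, ∑' h, f h (fun i => w i ω) * g (θ h ω) ∂Pr
      = (∑' h, ∫⁻ ω, f h (fun i => w i ω) ∂Pr) * ∫⁻ x, g x ∂P₀ := by
  have hmeas : ∀ h, Measurable fun ω => f h (fun i => w i ω) * g (θ h ω) :=
    fun h => ((hf h).comp (measurable_pi_lambda _ hw)).mul (hg.comp (hθ h))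
  rw [lintegral_tsum fun h => (hmeas h).aemeasurable, ← ENNReal.tsum_mul_right]
  refine tsum_congr fun h => ?_
  rw [← hlaw h, lintegral_map hg (hθ h)]
  exact hind.symm.lintegral_comp_mul_comp (measurable_pi_lambda _ hw)
    (measurable_pi_lambda _ hθ) (hf h) (hg.comp (measurable_pi_apply h))

lemma lintegral_tsum_tsum_mul_atoms (hw : ∀ h, Measurable (w h))
    (hθ : ∀ h, Measurable (θ h)) (hind : IndepFun (fun ω h => θ h ω) (fun ω h => w h ω) Pr)
    {f : ℕ → ℕ → (ℕ → ℝ) → ℝ≥0∞} (hf : ∀ h k, Measurable (f h k)) {g : 𝕏 × 𝕏 → ℝ≥0∞}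
    (hg : Measurable g) :
    ∫⁻ ω, ∑' h, ∑' k, f h k (fun i => w i ω) * g (θ h ω, θ k ω) ∂Pr
      = ∑' h, ∑' k, (∫⁻ ω, f h k (fun i => w i ω) ∂Pr)
          * ∫⁻ x, g x ∂(Pr.map fun ω => (θ h ω, θ k ω)) := by
  have hmeas : ∀ h k, Measurable fun ω => f h k (fun i => w i ω) * g (θ h ω, θ k ω) :=
    fun h k => ((hf h k).comp (measurable_pi_lambda _ hw)).mul (hg.comp ((hθ h).prodMk (hθ k)))
  rw [lintegral_tsum fun h => (Measurable.tsum (hmeas h)).aemeasurable]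
  refine tsum_congr fun h => ?_
  rw [lintegral_tsum fun k => (hmeas h k).aemeasurable]
  refine tsum_congr fun k => ?_
  rw [lintegral_map hg ((hθ h).prodMk (hθ k))]
  exact hind.symm.lintegral_comp_mul_comp (measurable_pi_lambda _ hw)
    (measurable_pi_lambda _ hθ) (hf h k)
    (hg.comp ((measurable_pi_apply h).prodMk (measurable_pi_apply k)))

lemma lintegral_mixM_prod_apply {P₀ : Measure 𝕏} [SFinite P₀] (hw : ∀ h, Measurable (w h))
    (hθ : ∀ h, Measurable (θ h)) (hlaw : ∀ h, Pr.map (θ h) = P₀)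
    (hind : IndepFun (fun ω h => θ h ω) (fun ω h => w h ω) Pr)
    {S : Set (𝕏 × 𝕏)} (hS : MeasurableSet S) :
    ∫⁻ ω, (mixM P₀ (fun h => w h ω) (fun h => θ h ω)).prod
        (mixM P₀ (fun h => w h ω) (fun h => θ h ω)) S ∂Pr =
      ∑' h, ∑' k, (∫⁻ ω, ENNReal.ofReal (w h ω) * ENNReal.ofReal (w k ω) ∂Pr)
          * Pr.map (fun ω => (θ h ω, θ k ω)) S
      + (∑' h, ∫⁻ ω, ENNReal.ofReal (1 - ∑' i, w i ω) * ENNReal.ofReal (w h ω) ∂Pr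
        + ∑' h, ∫⁻ ω, ENNReal.ofReal (w h ω) * ENNReal.ofReal (1 - ∑' i, w i ω) ∂Pr
        + ∫⁻ ω, ENNReal.ofReal (1 - ∑' i, w i ω) * ENNReal.ofReal (1 - ∑' i, w i ω) ∂Pr)
          * (P₀.prod P₀) S := by
  have hW : ∀ h, Measurable fun ω => ENNReal.ofReal (w h ω) := fun h => (hw h).ennreal_ofReal
  have hrest : Measurable fun ω => ENNReal.ofReal (1 - ∑' i, w i ω) := by fun_prop
  have hδ : Measurable fun x : 𝕏 × 𝕏 => Measure.dirac x S :=
    (Measure.measurable_coe hS).comp Measure.measurable_dirac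
  have hL : Measurable fun x => P₀ (Prod.mk x ⁻¹' S) := measurable_measure_prodMk_left hS
  have hR : Measurable fun y => P₀ ((fun x => (x, y)) ⁻¹' S) :=
    measurable_measure_prodMk_right hS
  have h₁ := lintegral_tsum_tsum_mul_atoms hw hθ hind
    (f := fun h k v => ENNReal.ofReal (v h) * ENNReal.ofReal (v k)) (fun h k => by fun_prop) hδ
  have h₂ := lintegral_tsum_mul_atom hw hθ hlaw hind
    (f := fun h v => ENNReal.ofReal (1 - ∑' i, v i) * ENNReal.ofReal (v h))
    (fun h => by fun_prop) hL
  have h₃ := lintegral_tsum_mul_atom hw hθ hlaw hind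
    (f := fun h v => ENNReal.ofReal (v h) * ENNReal.ofReal (1 - ∑' i, v i))
    (fun h => by fun_prop) hR
  simp only at h₁ h₂ h₃
  have m₂ : Measurable fun ω => ∑' h, ENNReal.ofReal (1 - ∑' i, w i ω) * ENNReal.ofReal (w h ω)
      * P₀ (Prod.mk (θ h ω) ⁻¹' S) :=
    Measurable.tsum fun h => (hrest.mul (hW h)).mul (hL.comp (hθ h))
  have m₃ : Measurable fun ω => ∑' h, ENNReal.ofReal (w h ω) * ENNReal.ofReal (1 - ∑' i, w i ω)
      * P₀ ((fun x => (x, θ h ω)) ⁻¹' S) :=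
    Measurable.tsum fun h => ((hW h).mul hrest).mul (hR.comp (hθ h))
  have m₄ : Measurable fun ω => ENNReal.ofReal (1 - ∑' i, w i ω)
      * ENNReal.ofReal (1 - ∑' i, w i ω) * (P₀.prod P₀) S := (hrest.mul hrest).mul_const _
  rw [lintegral_congr fun ω => mixM_prod_apply P₀ _ _ hS, lintegral_add_right _ m₄,
    lintegral_add_right _ m₃, lintegral_add_right _ m₂, h₁, h₂, h₃,
    lintegral_mul_const _ (hrest.fun_mul hrest), ← Measure.prod_apply hS,
    ← Measure.prod_apply_symm hS]
  simp only [Measure.dirac_apply' _ hS, lintegral_indicator_one hS]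
  ring

lemma lintegral_mixM_prod_apply_add [IsProbabilityMeasure Pr] {P₀ : Measure 𝕏}
    [IsProbabilityMeasure P₀] (hw : ∀ h, Measurable (w h)) (hθ : ∀ h, Measurable (θ h))
    (hlaw : ∀ h, Pr.map (θ h) = P₀) (hpair : Pairwise fun h k => IndepFun (θ h) (θ k) Pr)
    (hind : IndepFun (fun ω h => θ h ω) (fun ω h => w h ω) Pr)
    (hprob : ∀ᵐ ω ∂Pr, IsProbabilityMeasure (mixM P₀ (fun h => w h ω) (fun h => θ h ω)))
    {S : Set (𝕏 × 𝕏)} (hS : MeasurableSet S) :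
    ∫⁻ ω, (mixM P₀ (fun h => w h ω) (fun h => θ h ω)).prod
        (mixM P₀ (fun h => w h ω) (fun h => θ h ω)) S ∂Pr
      + (∑' h, ∫⁻ ω, ENNReal.ofReal (w h ω) * ENNReal.ofReal (w h ω) ∂Pr) * (P₀.prod P₀) S
      = (∑' h, ∫⁻ ω, ENNReal.ofReal (w h ω) * ENNReal.ofReal (w h ω) ∂Pr)
          * P₀.map (fun x => (x, x)) S + (P₀.prod P₀) S := by
  have hE := lintegral_mixM_prod_apply hw hθ hlaw hind hS
  have hone := lintegral_mixM_prod_apply hw hθ hlaw hind MeasurableSet.univ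
  have hpairS : ∀ {T} h k, Pr.map (fun ω => (θ h ω, θ k ω)) T
      = if h = k then P₀.map (fun x => (x, x)) T else (P₀.prod P₀) T := fun h k => by
    rw [map_pair_eq_ite hθ hlaw hpair]
    split_ifs <;> rfl
  have hmass : ∫⁻ ω, (mixM P₀ (fun h => w h ω) (fun h => θ h ω)).prod
      (mixM P₀ (fun h => w h ω) (fun h => θ h ω)) Set.univ ∂Pr = 1 := by
    rw [lintegral_congr_ae (hprob.mono fun ω _ => measure_univ), lintegral_one, measure_univ]
  simp only [hpairS, Measure.map_apply (by fun_prop : Measurable fun x : 𝕏 => (x, x)) .univ,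
    Set.preimage_univ, measure_univ, ite_self, mul_one, hmass] at hE hone
  rw [hE, tsum_tsum_mul_ite_add, ← hone, one_mul]

end IndependentAtoms

lemma IsSample.measure_pair_mem {ι : Type*} {Pr : Measure Ω} [IsFiniteMeasure Pr]
    {P : ι → Ω → Measure 𝕏} {X : ι → ℕ → Ω → 𝕏} (hX : IsSample Pr P X) {j : ι}
    (hPm : ∀ A, MeasurableSet A → Measurable fun ω => P j ω A)
    (hPprob : ∀ ω, IsProbabilityMeasure (P j ω)) {S : Set (𝕏 × 𝕏)} (hS : MeasurableSet S) :
    Pr {ω | (X j 0 ω, X j 1 ω) ∈ S} = ∫⁻ ω, (P j ω).prod (P j ω) S ∂Pr := by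
  classical
  let κ : Kernel Ω 𝕏 := ⟨P j, Measure.measurable_of_measurable_coe _ hPm⟩
  have : IsMarkovKernel κ := ⟨hPprob⟩
  have hpair : Measurable fun ω => (X j 0 ω, X j 1 ω) := (hX.1 j 0).prodMk (hX.1 j 1)
  have hlaw : Pr.map (fun ω => (X j 0 ω, X j 1 ω)) = (κ ×ₖ κ) ∘ₘ Pr := by
    refine Measure.ext_prod fun {B₁ B₂} hB₁ hB₂ => ?_
    have hrect := hX.2 {(j, 0), (j, 1)} (fun p => if p.2 = 0 then B₁ else B₂)
      (fun p _ => by split_ifs <;> assumption)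
    rw [Measure.map_apply hpair (hB₁.prod hB₂),
      Measure.bind_apply (hB₁.prod hB₂) (κ ×ₖ κ).aemeasurable]
    simpa [Kernel.prod_apply, Measure.prod_prod, κ, Set.preimage, and_comm] using hrect
  change Pr ((fun ω => (X j 0 ω, X j 1 ω)) ⁻¹' S) = _
  rw [← Measure.map_apply hpair hS, hlaw, Measure.bind_apply hS (κ ×ₖ κ).aemeasurable]
  simp only [Kernel.prod_apply]
  rfl

lemma IsMSSPwith.lintegral_prod_apply_add {ι : Type*} {Pr : Measure Ω} [IsProbabilityMeasure Pr]
    {P₀ : Measure 𝕏} [IsProbabilityMeasure P₀] {P : ι → Ω → Measure 𝕏} {π : ι → ℕ → Ω → ℝ}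
    {θ : ℕ → Ω → 𝕏} (hM : IsMSSPwith Pr P₀ P π θ) (j : ι) {S : Set (𝕏 × 𝕏)}
    (hS : MeasurableSet S) :
    ∫⁻ ω, (P j ω).prod (P j ω) S ∂Pr
      + (∑' h, ∫⁻ ω, ENNReal.ofReal (π j h ω) * ENNReal.ofReal (π j h ω) ∂Pr) * (P₀.prod P₀) S
      = (∑' h, ∫⁻ ω, ENNReal.ofReal (π j h ω) * ENNReal.ofReal (π j h ω) ∂Pr)
          * P₀.map (fun x => (x, x)) S + (P₀.prod P₀) S := by
  have hind : IndepFun (fun ω h => θ h ω) (fun ω h => π j h ω) Pr :=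
    hM.indepθπ.comp measurable_id (measurable_pi_apply j)
  have hprob : ∀ᵐ ω ∂Pr, IsProbabilityMeasure (mixM P₀ (fun h => π j h ω) (fun h => θ h ω)) :=
    (hM.repr j).mono fun ω hω => hω ▸ hM.probP j ω
  rw [lintegral_congr_ae ((hM.repr j).mono fun ω hω => by rw [hω])]
  exact lintegral_mixM_prod_apply_add (hM.measπ j) hM.measθ hM.lawθ
    (fun _ _ hhk => hM.iidθ.indepFun hhk) hind hprob hS

lemma prod_diagonal_eq_zero [MeasurableEq 𝕏] (μ ν : Measure 𝕏) [SFinite ν]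
    [NullSingletonClass ν] : (μ.prod ν) (Set.diagonal 𝕏) = 0 := by
  have hsection : ∀ x : 𝕏, Prod.mk x ⁻¹' Set.diagonal 𝕏 = {x} := fun x => by
    ext y
    simp [eq_comm]
  simp [Measure.prod_apply measurableSet_diagonal, hsection]

lemma variance_toReal_eq {Pr : Measure Ω} [IsProbabilityMeasure Pr] {f : Ω → ℝ≥0∞}
    (hf : Measurable f) (hf1 : ∀ ω, f ω ≤ 1) :
    variance (fun ω => (f ω).toReal) Pr
      = (∫⁻ ω, f ω * f ω ∂Pr).toReal - (∫⁻ ω, f ω ∂Pr).toReal ^ 2 := by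
  have hfin : ∀ ω, f ω < ∞ := fun ω => (hf1 ω).trans_lt ENNReal.one_lt_top
  have hmem : MemLp (fun ω => (f ω).toReal) 2 Pr := by
    refine (memLp_top_of_bound hf.ennreal_toReal.aestronglyMeasurable 1
      (ae_of_all _ fun ω => ?_)).mono_exponent le_top
    rw [Real.norm_eq_abs, abs_of_nonneg ENNReal.toReal_nonneg]
    exact ENNReal.toReal_le_of_le_ofReal zero_le_one (by simpa using hf1 ω)
  rw [variance_eq_sub hmem, integral_toReal hf.aemeasurable (ae_of_all _ hfin),
    ← integral_toReal (hf.fun_mul hf).aemeasurable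
      (ae_of_all _ fun ω => ENNReal.mul_lt_top (hfin ω) (hfin ω))]
  simp [pow_two, ENNReal.toReal_mul]

lemma variance_toReal_eq_of_moments {Pr : Measure Ω} [IsProbabilityMeasure Pr] {f : Ω → ℝ≥0∞}
    (hf : Measurable f) (hf1 : ∀ ω, f ω ≤ 1) {p ρ : ℝ≥0∞} (hp : p ≠ ∞) (hρ : ρ ≠ ∞)
    (hmean : ∫⁻ ω, f ω ∂Pr = p) (hsq : ∫⁻ ω, f ω * f ω ∂Pr + ρ * (p * p) = ρ * p + p * p) :
    variance (fun ω => (f ω).toReal) Pr = ρ.toReal * p.toReal * (1 - p.toReal) := by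
  have hsq_fin : ∫⁻ ω, f ω * f ω ∂Pr ≠ ∞ :=
    (ENNReal.add_ne_top.1 (hsq ▸ (by finiteness : ρ * p + p * p ≠ ∞))).1
  have hsq_real := congrArg ENNReal.toReal hsq
  rw [ENNReal.toReal_add hsq_fin (by finiteness), ENNReal.toReal_add (by finiteness)
    (by finiteness)] at hsq_real
  simp only [ENNReal.toReal_mul] at hsq_real
  rw [variance_toReal_eq hf hf1, hmean]
  linear_combination hsq_real

/-- For a multivariate species sampling process, the mean of `P j (A)` equals
`P₀ A` and its variance equals the within-group tie probability times `P₀ A (1 - P₀ A)`. -/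
theorem mSSP_mean_var {Ω : Type*} [MeasurableSpace Ω] {𝕏 : Type*} [MeasurableSpace 𝕏]
    [StandardBorelSpace 𝕏] {ι : Type*}
    (Pr : Measure Ω) [IsProbabilityMeasure Pr]
    (P₀ : Measure 𝕏) [IsProbabilityMeasure P₀] [NullSingletonClass P₀]
    (P : ι → Ω → Measure 𝕏) (hP : IsMSSP Pr P₀ P)
    (X : ι → ℕ → Ω → 𝕏) (hX : IsSample Pr P X)
    (j : ι) (A : Set 𝕏) (hA : MeasurableSet A) :
    (∫⁻ ω, P j ω A ∂Pr) = P₀ A ∧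
    variance (fun ω => (P j ω A).toReal) Pr
      = (Pr {ω | X j 0 ω = X j 1 ω}).toReal * (P₀ A).toReal * (1 - (P₀ A).toReal) := by
  obtain ⟨π, θ, hM⟩ := hP
  have := hM.probP j
  set ρ := ∑' h, ∫⁻ ω, ENNReal.ofReal (π j h ω) * ENNReal.ofReal (π j h ω) ∂Pr
  have hdiag : Measurable fun x : 𝕏 => (x, x) := by fun_prop
  have htie : Pr {ω | X j 0 ω = X j 1 ω} = ρ := by
    have key := hM.lintegral_prod_apply_add j measurableSet_diagonal
    rw [prod_diagonal_eq_zero, Measure.map_apply hdiag measurableSet_diagonal,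
      ← hX.measure_pair_mem (hM.measP j) (hM.probP j) measurableSet_diagonal] at key
    simpa [show (fun x : 𝕏 => (x, x)) ⁻¹' Set.diagonal 𝕏 = Set.univ from
      Set.eq_univ_of_forall fun _ => rfl] using key
  have hρ : ρ ≠ ∞ := htie ▸ measure_ne_top _ _
  have hmean : ∫⁻ ω, P j ω A ∂Pr = P₀ A := by
    have key := hM.lintegral_prod_apply_add j (hA.prod MeasurableSet.univ)
    simp only [Measure.prod_prod, measure_univ, mul_one, Measure.map_apply hdiag
      (hA.prod MeasurableSet.univ), Set.mk_preimage_prod, Set.preimage_id', Set.preimage_univ,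
      Set.inter_univ] at key
    rw [add_comm (ρ * P₀ A)] at key
    exact (ENNReal.add_left_inj (by finiteness)).1 key
  have hsq := hM.lintegral_prod_apply_add j (hA.prod hA)
  simp only [Measure.prod_prod, Measure.map_apply hdiag (hA.prod hA), Set.mk_preimage_prod,
    Set.preimage_id', Set.inter_self] at hsq
  exact ⟨hmean, htie ▸ variance_toReal_eq_of_moments (hM.measP j A hA) (fun _ => prob_le_one)
    (measure_ne_top _ _) hρ hmean hsq⟩

end MSSP
end

section
/- Let (P₁,…,P_J) be a multivariate species sampling process on 𝕏 = ℝ with non-atomic base measure P₀ having finite second moment, and let X be a sample from (P₁,…,P_J). Then for all j, k ∈ {1,…,J} and all indices i, m with (j,i) ≠ (k,m): Corr(X_{j,i}, X_{k,m}) = ℙ(X_{j,i} = X_{k,m}). (Each X_{j,i} has marginal law P₀, and since P₀ is non-atomic with finite second moment its variance is finite and strictly positive, so the correlation is well defined.) -/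
/-!
Conditionally on the weights, the atoms `θₕ` are i.i.d. with law `P₀`, and two atoms coincide
exactly when they carry the same index. Expanding `P_j(A) P_k(B)` therefore gives
`E[P_j(A) P_k(B)] = p P₀(A ∩ B) + (1 - p) P₀(A) P₀(B)` with `p = ∑ₕ E[π_{j,h} π_{k,h}]`, so two
distinct observations `(X_{j,i}, X_{k,m})` have law `p · diag_* P₀ + (1 - p) · P₀ ⊗ P₀`.
Since `P₀` has no atoms, `P₀ ⊗ P₀` does not charge the diagonal and the tie probability is `p`;
both marginals are `P₀` and the covariance is `p Var(P₀)`, so the correlation is `p` as well.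
-/

open MeasureTheory ProbabilityTheory
open scoped ENNReal

namespace MSSP

variable {Ω : Type*} [MeasurableSpace Ω] {𝕏 : Type*} [MeasurableSpace 𝕏]

open Function in
theorem lintegral_comp_eq_lintegral_lintegral_of_indepFun {α β : Type*} [MeasurableSpace α]
    [MeasurableSpace β] {μ : Measure Ω} [IsFiniteMeasure μ] {X : Ω → α} {Y : Ω → β}
    (hXY : IndepFun X Y μ) (hX : Measurable X) (hY : Measurable Y) {F : α → β → ℝ≥0∞}
    (hF : Measurable (uncurry F)) :
    ∫⁻ ω, F (X ω) (Y ω) ∂μ = ∫⁻ ω', ∫⁻ ω, F (X ω) (Y ω') ∂μ ∂μ := by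
  have hFy : Measurable fun y => ∫⁻ x, F x y ∂(μ.map X) := hF.lintegral_prod_left'
  calc ∫⁻ ω, F (X ω) (Y ω) ∂μ = ∫⁻ z, uncurry F z ∂(μ.map fun ω => (X ω, Y ω)) :=
        (lintegral_map hF (hX.prodMk hY)).symm
    _ = ∫⁻ z, uncurry F z ∂((μ.map X).prod (μ.map Y)) := by
        rw [hXY.map_prod_eq_prod_map_map hX.aemeasurable hY.aemeasurable]
    _ = ∫⁻ y, ∫⁻ x, F x y ∂(μ.map X) ∂(μ.map Y) := lintegral_prod_symm' _ hF
    _ = ∫⁻ ω', ∫⁻ ω, F (X ω) (Y ω') ∂μ ∂μ := by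
        rw [lintegral_map hFy hY]
        exact lintegral_congr fun ω' =>
          lintegral_map (hF.comp (measurable_id.prodMk measurable_const)) hX

lemma tsum_mul_le_one {a b : ℕ → ℝ≥0∞} (ha : ∑' h, a h ≤ 1) (hb : ∀ h, b h ≤ 1) :
    ∑' h, a h * b h ≤ 1 :=
  (ENNReal.tsum_le_tsum fun h => mul_le_of_le_one_right' (hb h)).trans ha

lemma tsum_tsum_mul_ite_add_s10 (a b : ℕ → ℝ≥0∞) (x y : ℝ≥0∞) :
    ∑' h, ∑' l, a h * b l * (if h = l then x else y) + (∑' h, a h * b h) * y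
      = (∑' h, a h) * (∑' l, b l) * y + (∑' h, a h * b h) * x := by
  have hterm : ∀ h l, a h * b l * (if h = l then x else y) + (if h = l then a h * b l * y else 0)
      = a h * b l * y + (if h = l then a h * b l * x else 0) := by
    intro h l
    split_ifs <;> ring
  have hsum := congrArg (fun f : ℕ → ℕ → ℝ≥0∞ => ∑' h, ∑' l, f h l) (funext₂ hterm)
  simpa only [ENNReal.tsum_add, tsum_ite_eq', ENNReal.tsum_mul_right, ENNReal.tsum_mul_left]
    using hsum

/-- `mixM P₀ w t A`, with the weights already in `ℝ≥0∞`. -/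
noncomputable def speciesMass (P₀ : Measure 𝕏) (A : Set 𝕏) (t : ℕ → 𝕏) (a : ℕ → ℝ≥0∞) : ℝ≥0∞ :=
  ∑' h, a h * A.indicator (1 : 𝕏 → ℝ≥0∞) (t h) + (1 - ∑' h, a h) * P₀ A

lemma measurable_speciesMass (P₀ : Measure 𝕏) {A : Set 𝕏} (hA : MeasurableSet A) :
    Measurable fun z : (ℕ → 𝕏) × (ℕ → ℝ≥0∞) => speciesMass P₀ A z.1 z.2 := by
  have hw : ∀ h, Measurable fun z : (ℕ → 𝕏) × (ℕ → ℝ≥0∞) => z.2 h := fun h =>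
    (measurable_pi_apply h).comp measurable_snd
  have hI : ∀ h, Measurable fun z : (ℕ → 𝕏) × (ℕ → ℝ≥0∞) =>
      A.indicator (1 : 𝕏 → ℝ≥0∞) (z.1 h) := fun h =>
    (measurable_one.indicator hA).comp ((measurable_pi_apply h).comp measurable_fst)
  exact (Measurable.tsum fun h => (hw h).mul (hI h)).add
    ((measurable_const.sub (Measurable.tsum hw)).mul_const _)

section IidAtoms

variable {Pr : Measure Ω} {P₀ : Measure 𝕏} {θ : ℕ → Ω → 𝕏}
  (hθ : ∀ h, Measurable (θ h)) (hlaw : ∀ h, Pr.map (θ h) = P₀)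
  (hind : Pairwise fun h l => IndepFun (θ h) (θ l) Pr)
include hθ

lemma measurable_indicator_comp {A : Set 𝕏} (hA : MeasurableSet A) (h : ℕ) :
    Measurable fun ω => A.indicator (1 : 𝕏 → ℝ≥0∞) (θ h ω) :=
  (measurable_one.indicator hA).comp (hθ h)

include hlaw

lemma lintegral_indicator_comp {A : Set 𝕏} (hA : MeasurableSet A) (h : ℕ) :
    ∫⁻ ω, A.indicator (1 : 𝕏 → ℝ≥0∞) (θ h ω) ∂Pr = P₀ A := by
  rw [← lintegral_map (measurable_one.indicator hA) (hθ h), hlaw h, lintegral_indicator_one hA]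

include hind in
lemma lintegral_indicator_comp_mul_indicator_comp {A B : Set 𝕏} (hA : MeasurableSet A)
    (hB : MeasurableSet B) (h l : ℕ) :
    ∫⁻ ω, A.indicator (1 : 𝕏 → ℝ≥0∞) (θ h ω) * B.indicator 1 (θ l ω) ∂Pr
      = if h = l then P₀ (A ∩ B) else P₀ A * P₀ B := by
  split_ifs with hhl
  · subst hhl
    simp_rw [← Pi.mul_apply (A.indicator (1 : 𝕏 → ℝ≥0∞)), ← Set.inter_indicator_one]
    exact lintegral_indicator_comp hθ hlaw (hA.inter hB) h
  · rw [← lintegral_indicator_comp hθ hlaw hA h, ← lintegral_indicator_comp hθ hlaw hB l]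
    exact lintegral_mul_eq_lintegral_mul_lintegral_of_indepFun''
      (measurable_indicator_comp hθ hA h).aemeasurable
      (measurable_indicator_comp hθ hB l).aemeasurable
      ((hind hhl).comp (measurable_one.indicator hA) (measurable_one.indicator hB))

lemma lintegral_tsum_mul_indicator_comp {A : Set 𝕏} (hA : MeasurableSet A) (a : ℕ → ℝ≥0∞) :
    ∫⁻ ω, ∑' h, a h * A.indicator (1 : 𝕏 → ℝ≥0∞) (θ h ω) ∂Pr = (∑' h, a h) * P₀ A := by
  rw [lintegral_tsum fun h => ((measurable_indicator_comp hθ hA h).const_mul _).aemeasurable,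
    ← ENNReal.tsum_mul_right]
  refine tsum_congr fun h => ?_
  rw [lintegral_const_mul _ (measurable_indicator_comp hθ hA h),
    lintegral_indicator_comp hθ hlaw hA]

include hind in
lemma lintegral_tsum_mul_indicator_comp_mul_tsum_add {A B : Set 𝕏} (hA : MeasurableSet A)
    (hB : MeasurableSet B) (a b : ℕ → ℝ≥0∞) :
    ∫⁻ ω, (∑' h, a h * A.indicator (1 : 𝕏 → ℝ≥0∞) (θ h ω))
        * ∑' l, b l * B.indicator (1 : 𝕏 → ℝ≥0∞) (θ l ω) ∂Pr
      + (∑' h, a h * b h) * (P₀ A * P₀ B)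
      = (∑' h, a h) * (∑' l, b l) * (P₀ A * P₀ B) + (∑' h, a h * b h) * P₀ (A ∩ B) := by
  have hprod : ∀ ω, (∑' h, a h * A.indicator (1 : 𝕏 → ℝ≥0∞) (θ h ω))
        * (∑' l, b l * B.indicator (1 : 𝕏 → ℝ≥0∞) (θ l ω))
      = ∑' h, ∑' l, a h * b l *
          (A.indicator (1 : 𝕏 → ℝ≥0∞) (θ h ω) * B.indicator 1 (θ l ω)) := fun ω => by
    rw [← ENNReal.tsum_mul_right]
    refine tsum_congr fun h => ?_
    rw [← ENNReal.tsum_mul_left]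
    exact tsum_congr fun l => by ring
  have hmeas : ∀ h l, Measurable fun ω =>
      A.indicator (1 : 𝕏 → ℝ≥0∞) (θ h ω) * B.indicator 1 (θ l ω) := fun h l =>
    (measurable_indicator_comp hθ hA h).mul (measurable_indicator_comp hθ hB l)
  rw [lintegral_congr hprod, lintegral_tsum fun h =>
    (Measurable.tsum fun l => (hmeas h l).const_mul _).aemeasurable]
  simp_rw [lintegral_tsum fun l => ((hmeas _ l).const_mul _).aemeasurable,
    lintegral_const_mul _ (hmeas _ _),
    lintegral_indicator_comp_mul_indicator_comp hθ hlaw hind hA hB]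
  exact tsum_tsum_mul_ite_add_s10 a b _ _

include hind in
/-- `lintegral_speciesMass_mul` with `(∑' h, a h * b h) * (P₀ A * P₀ B)` moved to the left, which
avoids the truncated subtraction `1 - ∑' h, a h * b h`. -/
lemma lintegral_speciesMass_mul_add [IsProbabilityMeasure Pr] {a b : ℕ → ℝ≥0∞}
    (ha : ∑' h, a h ≤ 1) (hb : ∑' h, b h ≤ 1) {A B : Set 𝕏} (hA : MeasurableSet A)
    (hB : MeasurableSet B) :
    ∫⁻ ω, speciesMass P₀ A (θ · ω) a * speciesMass P₀ B (θ · ω) b ∂Pr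
        + (∑' h, a h * b h) * (P₀ A * P₀ B)
      = P₀ A * P₀ B + (∑' h, a h * b h) * P₀ (A ∩ B) := by
  set SA := fun ω => ∑' h, a h * A.indicator (1 : 𝕏 → ℝ≥0∞) (θ h ω)
  set SB := fun ω => ∑' l, b l * B.indicator (1 : 𝕏 → ℝ≥0∞) (θ l ω)
  set cA := (1 - ∑' h, a h) * P₀ A
  set cB := (1 - ∑' h, b h) * P₀ B
  have hSA : Measurable SA :=
    Measurable.tsum fun h => (measurable_indicator_comp hθ hA h).const_mul _
  have hSB : Measurable SB :=
    Measurable.tsum fun h => (measurable_indicator_comp hθ hB h).const_mul _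
  have hexpand : ∀ ω, speciesMass P₀ A (θ · ω) a * speciesMass P₀ B (θ · ω) b
      = SA ω * SB ω + (SA ω * cB + (cA * SB ω + cA * cB)) := fun ω => by
    simp only [speciesMass, SA, SB, cA, cB]
    ring
  rw [lintegral_congr hexpand, lintegral_add_left (f := fun ω => SA ω * SB ω) (hSA.mul hSB),
    lintegral_add_left (f := fun ω => SA ω * cB) (hSA.mul_const _),
    lintegral_add_left (f := fun ω => cA * SB ω) (hSB.const_mul _),
    lintegral_mul_const _ hSA, lintegral_const_mul _ hSB, lintegral_const, measure_univ, mul_one]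
  calc (∫⁻ ω, SA ω * SB ω ∂Pr) + ((∫⁻ ω, SA ω ∂Pr) * cB + (cA * ∫⁻ ω, SB ω ∂Pr + cA * cB))
        + (∑' h, a h * b h) * (P₀ A * P₀ B)
      = ((∫⁻ ω, SA ω * SB ω ∂Pr) + (∑' h, a h * b h) * (P₀ A * P₀ B))
        + ((∫⁻ ω, SA ω ∂Pr) * cB + (cA * ∫⁻ ω, SB ω ∂Pr + cA * cB)) := by ring
    _ = ((∑' h, a h) * (∑' l, b l) * (P₀ A * P₀ B) + (∑' h, a h * b h) * P₀ (A ∩ B))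
        + ((∑' h, a h) * P₀ A * cB + (cA * ((∑' h, b h) * P₀ B) + cA * cB)) := by
      rw [lintegral_tsum_mul_indicator_comp_mul_tsum_add hθ hlaw hind hA hB,
        lintegral_tsum_mul_indicator_comp hθ hlaw hA, lintegral_tsum_mul_indicator_comp hθ hlaw hB]
    _ = ((∑' h, a h) + (1 - ∑' h, a h)) * ((∑' h, b h) + (1 - ∑' h, b h)) * (P₀ A * P₀ B)
        + (∑' h, a h * b h) * P₀ (A ∩ B) := by ring
    _ = P₀ A * P₀ B + (∑' h, a h * b h) * P₀ (A ∩ B) := by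
      rw [add_tsub_cancel_of_le ha, add_tsub_cancel_of_le hb, one_mul, one_mul]

include hind in
lemma lintegral_speciesMass_mul [IsProbabilityMeasure Pr] {a b : ℕ → ℝ≥0∞}
    (ha : ∑' h, a h ≤ 1) (hb : ∑' h, b h ≤ 1) {A B : Set 𝕏} (hA : MeasurableSet A)
    (hB : MeasurableSet B) :
    ∫⁻ ω, speciesMass P₀ A (θ · ω) a * speciesMass P₀ B (θ · ω) b ∂Pr
      = (∑' h, a h * b h) * P₀ (A ∩ B) + (1 - ∑' h, a h * b h) * (P₀ A * P₀ B) := by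
  have : IsProbabilityMeasure P₀ := hlaw 0 ▸ Measure.isProbabilityMeasure_map (hθ 0).aemeasurable
  have hD : ∑' h, a h * b h ≤ 1 := tsum_mul_le_one ha fun h => (ENNReal.le_tsum h).trans hb
  have hfin : (∑' h, a h * b h) * (P₀ A * P₀ B) ≠ ∞ :=
    ENNReal.mul_ne_top (ne_top_of_le_ne_top ENNReal.one_ne_top hD)
      (ENNReal.mul_ne_top (measure_ne_top _ _) (measure_ne_top _ _))
  rw [← ENNReal.add_left_inj hfin, lintegral_speciesMass_mul_add hθ hlaw hind ha hb hA hB,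
    add_assoc, ← add_mul, tsub_add_cancel_of_le hD, one_mul, add_comm]

end IidAtoms

lemma mixM_apply (P₀ : Measure 𝕏) (w : ℕ → ℝ) (t : ℕ → 𝕏) {A : Set 𝕏} (hA : MeasurableSet A) :
    mixM P₀ w t A = ∑' h, ENNReal.ofReal (w h) * A.indicator 1 (t h)
      + ENNReal.ofReal (1 - ∑' h, w h) * P₀ A := by
  simp [mixM, Measure.sum_apply _ hA, Measure.dirac_apply' _ hA]

lemma ofReal_one_sub_tsum {w : ℕ → ℝ} (hw : ∀ h, 0 ≤ w h)
    (hfin : ∑' h, ENNReal.ofReal (w h) ≠ ∞) :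
    ENNReal.ofReal (1 - ∑' h, w h) = 1 - ∑' h, ENNReal.ofReal (w h) := by
  have hsum : ∑' h, w h = (∑' h, ENNReal.ofReal (w h)).toReal := by
    rw [ENNReal.tsum_toReal_eq fun h => ENNReal.ofReal_ne_top]
    exact tsum_congr fun h => (ENNReal.toReal_ofReal (hw h)).symm
  rw [hsum, ENNReal.ofReal_sub _ ENNReal.toReal_nonneg, ENNReal.ofReal_one,
    ENNReal.ofReal_toReal hfin]

noncomputable def tieProb {ι : Type*} (Pr : Measure Ω) (π : ι → ℕ → Ω → ℝ) (j k : ι) : ℝ≥0∞ :=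
  ∫⁻ ω, ∑' h, ENNReal.ofReal (π j h ω) * ENNReal.ofReal (π k h ω) ∂Pr

noncomputable def tieMixture (p : ℝ≥0∞) (ν : Measure 𝕏) : Measure (𝕏 × 𝕏) :=
  p • ν.map Function.diag + (1 - p) • ν.prod ν

section TieMixture

variable {p : ℝ≥0∞} (ν : Measure 𝕏)

lemma tieMixture_prod [SFinite ν] {A B : Set 𝕏} (hA : MeasurableSet A) (hB : MeasurableSet B) :
    tieMixture p ν (A ×ˢ B) = p * ν (A ∩ B) + (1 - p) * (ν A * ν B) := by
  simp only [tieMixture, Measure.add_apply, Measure.smul_apply, smul_eq_mul,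
    Measure.map_apply measurable_diag (hA.prod hB), Measure.prod_prod]
  rfl

variable [IsProbabilityMeasure ν]

lemma map_fst_tieMixture (hp : p ≤ 1) : (tieMixture p ν).map Prod.fst = ν := by
  rw [tieMixture, Measure.map_add _ _ measurable_fst, Measure.map_smul, Measure.map_smul,
    Measure.map_map measurable_fst measurable_diag, Measure.map_fst_prod, measure_univ, one_smul,
    show Prod.fst ∘ Function.diag = (id : 𝕏 → 𝕏) from rfl, Measure.map_id, ← add_smul,
    add_tsub_cancel_of_le hp, one_smul]

lemma map_snd_tieMixture (hp : p ≤ 1) : (tieMixture p ν).map Prod.snd = ν := by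
  rw [tieMixture, Measure.map_add _ _ measurable_snd, Measure.map_smul, Measure.map_smul,
    Measure.map_map measurable_snd measurable_diag, Measure.map_snd_prod, measure_univ, one_smul,
    show Prod.snd ∘ Function.diag = (id : 𝕏 → 𝕏) from rfl, Measure.map_id, ← add_smul,
    add_tsub_cancel_of_le hp, one_smul]

lemma tieMixture_diagonal [MeasurableEq 𝕏] [NullSingletonClass ν] :
    tieMixture p ν (Set.diagonal 𝕏) = p := by
  have hslice : ∀ x, ν (Prod.mk x ⁻¹' Set.diagonal 𝕏) = 0 := fun x => by
    rw [show Prod.mk x ⁻¹' Set.diagonal 𝕏 = {x} by ext; simp [eq_comm], measure_singleton]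
  have hdiag : Function.diag ⁻¹' Set.diagonal 𝕏 = Set.univ :=
    Set.eq_univ_of_forall Set.mem_diagonal
  simp [tieMixture, Measure.map_apply measurable_diag measurableSet_diagonal, hdiag,
    Measure.prod_apply measurableSet_diagonal, hslice]

end TieMixture

lemma measure_eq_of_map_eq_tieMixture [MeasurableEq 𝕏] {Pr : Measure Ω} {U V : Ω → 𝕏}
    (hU : Measurable U) (hV : Measurable V) {ν : Measure 𝕏} [IsProbabilityMeasure ν]
    [NullSingletonClass ν] {p : ℝ≥0∞} (hlaw : Pr.map (fun ω => (U ω, V ω)) = tieMixture p ν) :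
    Pr {ω | U ω = V ω} = p := by
  rw [← tieMixture_diagonal (p := p) ν, ← hlaw,
    Measure.map_apply (hU.prodMk hV) measurableSet_diagonal]
  rfl

lemma variance_id_pos {ν : Measure ℝ} [IsProbabilityMeasure ν] [NullSingletonClass ν]
    (h : MemLp id 2 ν) : 0 < variance id ν := by
  refine (variance_nonneg _ _).lt_of_ne fun hzero => ?_
  have hconst := ae_eq_integral_of_variance_eq_zero h hzero.symm
  have hatom : ∀ᵐ x ∂ν, x ≠ ∫ y, id y ∂ν := by simp [ae_iff]
  obtain ⟨x, hx, hx'⟩ := (hconst.and hatom).exists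
  exact hx' hx

lemma integral_fst_mul_snd_tieMixture {ν : Measure ℝ} [IsProbabilityMeasure ν]
    (hmom : Integrable (fun x => x ^ 2) ν) {p : ℝ≥0∞} (hp : p ≤ 1) :
    ∫ z, z.1 * z.2 ∂tieMixture p ν
      = p.toReal * ∫ x, x ^ 2 ∂ν + (1 - p.toReal) * (∫ x, x ∂ν) ^ 2 := by
  have hid : Integrable id ν :=
    ((memLp_two_iff_integrable_sq aestronglyMeasurable_id).2 hmom).integrable one_le_two
  have hdiag : Integrable (fun z : ℝ × ℝ => z.1 * z.2) (ν.map Function.diag) := by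
    rw [integrable_map_measure (by fun_prop) measurable_diag.aemeasurable]
    simpa [Function.comp_def, sq] using hmom
  rw [tieMixture,
    integral_add_measure (hdiag.smul_measure (ne_top_of_le_ne_top ENNReal.one_ne_top hp))
      ((hid.mul_prod hid).smul_measure (by simp)),
    integral_smul_measure, integral_smul_measure,
    integral_map measurable_diag.aemeasurable (by fun_prop),
    integral_prod_mul (fun x : ℝ => x) (fun x : ℝ => x),
    ENNReal.toReal_sub_of_le hp ENNReal.one_ne_top]
  simp [sq]

lemma corrR_eq_of_map_eq_tieMixture {Pr : Measure Ω} {U V : Ω → ℝ} (hU : Measurable U)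
    (hV : Measurable V) {ν : Measure ℝ} [IsProbabilityMeasure ν] [NullSingletonClass ν]
    (hmom : Integrable (fun x => x ^ 2) ν) {p : ℝ≥0∞} (hp : p ≤ 1)
    (hlaw : Pr.map (fun ω => (U ω, V ω)) = tieMixture p ν) :
    corrR Pr U V = p.toReal := by
  have hUV := hU.prodMk hV
  have hlawU : Pr.map U = ν := by
    rw [← map_fst_tieMixture ν hp, ← hlaw, Measure.map_map measurable_fst hUV]
    rfl
  have hlawV : Pr.map V = ν := by
    rw [← map_snd_tieMixture ν hp, ← hlaw, Measure.map_map measurable_snd hUV]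
    rfl
  have hmem : MemLp id 2 ν := (memLp_two_iff_integrable_sq aestronglyMeasurable_id).2 hmom
  have hmean : ∀ {Y : Ω → ℝ}, Measurable Y → Pr.map Y = ν → ∫ ω, Y ω ∂Pr = ∫ x, x ∂ν :=
    fun hY hYν => by
      rw [← hYν, integral_map (f := fun x => x) hY.aemeasurable aestronglyMeasurable_id]
  have hvar : ∀ {Y : Ω → ℝ}, Measurable Y → Pr.map Y = ν → variance Y Pr = variance id ν :=
    fun hY hYν => by
      rw [← hYν, variance_map aemeasurable_id hY.aemeasurable]
      rfl
  have hcov : covR Pr U V = p.toReal * variance id ν := by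
    rw [covR, hmean hU hlawU, hmean hV hlawV,
      ← integral_map hUV.aemeasurable (f := fun z : ℝ × ℝ => z.1 * z.2) (by fun_prop), hlaw,
      integral_fst_mul_snd_tieMixture hmom hp, variance_eq_sub hmem]
    simp only [Pi.pow_apply, id]
    ring
  rw [corrR, hcov, hvar hU hlawU, hvar hV hlawV, Real.mul_self_sqrt (variance_nonneg _ _)]
  field_simp [(variance_id_pos hmem).ne']

lemma IsSample.measure_preimage_prod {ι : Type*} {Pr : Measure Ω} {P : ι → Ω → Measure 𝕏}
    {X : ι → ℕ → Ω → 𝕏} (hX : IsSample Pr P X) {j k : ι} {i m : ℕ} (hne : (j, i) ≠ (k, m))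
    {A B : Set 𝕏} (hA : MeasurableSet A) (hB : MeasurableSet B) :
    Pr ((fun ω => (X j i ω, X k m ω)) ⁻¹' A ×ˢ B) = ∫⁻ ω, P j ω A * P k ω B ∂Pr := by
  classical
  let C : ι × ℕ → Set 𝕏 := fun p => if p = (j, i) then A else B
  have hC : ∀ p ∈ ({(j, i), (k, m)} : Finset (ι × ℕ)), MeasurableSet (C p) := fun p _ => by
    by_cases hp : p = (j, i) <;> simp [C, hp, hA, hB]
  convert hX.2 {(j, i), (k, m)} C hC using 1
  · congr 1
    ext ω
    simp [C, hne.symm]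
  · simp only [Finset.prod_pair hne, C, if_neg hne.symm, if_true]

namespace IsMSSPwith

variable {ι : Type*} {Pr : Measure Ω} {P₀ : Measure 𝕏} {P : ι → Ω → Measure 𝕏}
  {π : ι → ℕ → Ω → ℝ} {θ : ℕ → Ω → 𝕏}

lemma isProbabilityMeasure_base [IsProbabilityMeasure Pr] (hP : IsMSSPwith Pr P₀ P π θ) :
    IsProbabilityMeasure P₀ :=
  hP.lawθ 0 ▸ Measure.isProbabilityMeasure_map (hP.measθ 0).aemeasurable

/-- Since `P j ω` is a probability measure, the weights are summable and `mixM` has no junk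
value: `ENNReal.ofReal (1 - ∑' h, π j h ω)` is the true remaining mass. -/
lemma ae_eq_speciesMass (hP : IsMSSPwith Pr P₀ P π θ) (j : ι) :
    ∀ᵐ ω ∂Pr, ∑' h, ENNReal.ofReal (π j h ω) ≤ 1 ∧ ∀ A, MeasurableSet A →
      P j ω A = speciesMass P₀ A (θ · ω) fun h => ENNReal.ofReal (π j h ω) := by
  filter_upwards [hP.repr j, hP.subprob j] with ω hrepr hsub
  have hmass : ∑' h, ENNReal.ofReal (π j h ω)
      + ENNReal.ofReal (1 - ∑' h, π j h ω) * P₀ Set.univ = 1 := by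
    simpa [hrepr, mixM_apply _ _ _ MeasurableSet.univ] using (hP.probP j ω).measure_univ
  have hle : ∑' h, ENNReal.ofReal (π j h ω) ≤ 1 := hmass ▸ le_self_add
  refine ⟨hle, fun A hA => ?_⟩
  rw [hrepr, mixM_apply _ _ _ hA, speciesMass,
    ofReal_one_sub_tsum (fun h => (hsub.1 h).1) (ne_top_of_le_ne_top ENNReal.one_ne_top hle)]

lemma ae_tsum_mul_le_one (hP : IsMSSPwith Pr P₀ P π θ) (j k : ι) :
    ∀ᵐ ω ∂Pr, ∑' h, ENNReal.ofReal (π j h ω) * ENNReal.ofReal (π k h ω) ≤ 1 := by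
  filter_upwards [hP.ae_eq_speciesMass j, hP.ae_eq_speciesMass k] with ω hj hk
  exact tsum_mul_le_one hj.1 fun h => (ENNReal.le_tsum h).trans hk.1

lemma tieProb_le_one [IsProbabilityMeasure Pr] (hP : IsMSSPwith Pr P₀ P π θ) (j k : ι) :
    tieProb Pr π j k ≤ 1 :=
  (lintegral_mono_ae (hP.ae_tsum_mul_le_one j k)).trans_eq (by simp)

/-- Integrating first over the atoms, for frozen weights, reduces this to
`lintegral_speciesMass_mul`. -/
lemma lintegral_apply_mul_apply [IsProbabilityMeasure Pr] (hP : IsMSSPwith Pr P₀ P π θ)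
    (j k : ι) {A B : Set 𝕏} (hA : MeasurableSet A) (hB : MeasurableSet B) :
    ∫⁻ ω, P j ω A * P k ω B ∂Pr
      = tieProb Pr π j k * P₀ (A ∩ B) + (1 - tieProb Pr π j k) * (P₀ A * P₀ B) := by
  set W : Ω → ι → ℕ → ℝ≥0∞ := fun ω j h => ENNReal.ofReal (π j h ω)
  set F : (ℕ → 𝕏) → (ι → ℕ → ℝ≥0∞) → ℝ≥0∞ := fun t u =>
    speciesMass P₀ A t (u j) * speciesMass P₀ B t (u k)
  set D : Ω → ℝ≥0∞ := fun ω => ∑' h, W ω j h * W ω k h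
  have hψ : Measurable fun (u : ι → ℕ → ℝ) j h => ENNReal.ofReal (u j h) :=
    measurable_pi_lambda _ fun j => measurable_pi_lambda _ fun h =>
      ENNReal.measurable_ofReal.comp ((measurable_pi_apply h).comp (measurable_pi_apply j))
  have hW : Measurable W := hψ.comp (measurable_pi_lambda _ fun j =>
    measurable_pi_lambda _ fun h => hP.measπ j h)
  have hindep : IndepFun (fun ω h => θ h ω) W Pr := hP.indepθπ.comp measurable_id hψ
  have hF : Measurable (Function.uncurry F) := by
    have hu : ∀ j, Measurable fun z : (ℕ → 𝕏) × (ι → ℕ → ℝ≥0∞) => (z.1, z.2 j) := fun j =>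
      measurable_fst.prodMk ((measurable_pi_apply j).comp measurable_snd)
    exact ((measurable_speciesMass P₀ hA).comp (hu j)).mul
      ((measurable_speciesMass P₀ hB).comp (hu k))
  have hD : Measurable D := Measurable.tsum fun h =>
    ((measurable_pi_apply h).comp ((measurable_pi_apply j).comp hW)).mul
      ((measurable_pi_apply h).comp ((measurable_pi_apply k).comp hW))
  calc ∫⁻ ω, P j ω A * P k ω B ∂Pr = ∫⁻ ω, F (θ · ω) (W ω) ∂Pr := by
        refine lintegral_congr_ae ?_
        filter_upwards [hP.ae_eq_speciesMass j, hP.ae_eq_speciesMass k] with ω hj hk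
        rw [hj.2 A hA, hk.2 B hB]
    _ = ∫⁻ ω', ∫⁻ ω, F (θ · ω) (W ω') ∂Pr ∂Pr :=
        lintegral_comp_eq_lintegral_lintegral_of_indepFun hindep
          (measurable_pi_lambda _ hP.measθ) hW hF
    _ = ∫⁻ ω', D ω' * P₀ (A ∩ B) + (1 - D ω') * (P₀ A * P₀ B) ∂Pr := by
        refine lintegral_congr_ae ?_
        filter_upwards [hP.ae_eq_speciesMass j, hP.ae_eq_speciesMass k] with ω hj hk
        exact lintegral_speciesMass_mul hP.measθ hP.lawθ (fun h l hhl => hP.iidθ.indepFun hhl)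
          hj.1 hk.1 hA hB
    _ = tieProb Pr π j k * P₀ (A ∩ B) + (1 - tieProb Pr π j k) * (P₀ A * P₀ B) := by
        rw [lintegral_add_left (hD.mul_const _), lintegral_mul_const _ hD,
          lintegral_mul_const (f := fun ω => 1 - D ω) _ (measurable_const.sub hD),
          lintegral_sub hD (ne_top_of_le_ne_top ENNReal.one_ne_top (hP.tieProb_le_one j k))
            (hP.ae_tsum_mul_le_one j k), lintegral_const, measure_univ, mul_one]
        rfl

lemma map_pair_eq_tieMixture [IsProbabilityMeasure Pr] {X : ι → ℕ → Ω → 𝕏}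
    (hP : IsMSSPwith Pr P₀ P π θ) (hX : IsSample Pr P X) {j k : ι} {i m : ℕ}
    (hne : (j, i) ≠ (k, m)) :
    Pr.map (fun ω => (X j i ω, X k m ω)) = tieMixture (tieProb Pr π j k) P₀ := by
  have := hP.isProbabilityMeasure_base
  refine Measure.ext_prod fun hA hB => ?_
  rw [Measure.map_apply ((hX.1 j i).prodMk (hX.1 k m)) (hA.prod hB),
    hX.measure_preimage_prod hne hA hB, hP.lintegral_apply_mul_apply j k hA hB,
    tieMixture_prod _ hA hB]

end IsMSSPwith

/-- For a multivariate species sampling process on `ℝ` whose base measure has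
a finite second moment, the correlation between any two distinct observations equals their tie
probability. -/
theorem mSSP_correlation_observations {Ω : Type*} [MeasurableSpace Ω] {ι : Type*}
    (Pr : Measure Ω) [IsProbabilityMeasure Pr]
    (P₀ : Measure ℝ) [IsProbabilityMeasure P₀] [NullSingletonClass P₀]
    (hmom : Integrable (fun x => x ^ 2) P₀)
    (P : ι → Ω → Measure ℝ) (hP : IsMSSP Pr P₀ P)
    (X : ι → ℕ → Ω → ℝ) (hX : IsSample Pr P X)
    (j k : ι) (i m : ℕ) (hne : (j, i) ≠ (k, m)) :
    corrR Pr (X j i) (X k m) = (Pr {ω | X j i ω = X k m ω}).toReal := by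
  obtain ⟨π, θ, hP⟩ := hP
  have hlaw := hP.map_pair_eq_tieMixture hX hne
  rw [corrR_eq_of_map_eq_tieMixture (hX.1 j i) (hX.1 k m) hmom (hP.tieProb_le_one j k) hlaw,
    measure_eq_of_map_eq_tieMixture (hX.1 j i) (hX.1 k m) hlaw]

end MSSP
end

section
/- Let (P₁,…,P_J) be a multivariate species sampling process with non-atomic base measure P₀ and let X be a sample from (P₁,…,P_J). Fix group sizes I₁,…,I_J with n = Σ_j I_j, let Π_n be the random partition induced by the ties of (X_{j,i} : i ≤ I_j, j ≤ J), and fix a partition configuration with D blocks and group counts (n_{j,d}) having ℙ(Π_n = this configuration) > 0; write X*₁,…,X*_D for the distinct observed values listed in order of arrival by group. Then for every group j: (a) for each l ≤ D, ℙ(X_{j,I_j+1} = X*_l | Π_n = the given configuration) = pEPPF_D^{(n+1)}(n₁,…,[n_{j,1},…,n_{j,l}+1,…,n_{j,D}],…,n_J) / pEPPF_D^{(n)}(n₁,…,n_J); and (b) ℙ(X_{j,I_j+1} ∉ {X*₁,…,X*_D} | Π_n = the given configuration) = pEPPF_{D+1}^{(n+1)}([n₁,0],…,[n_{j,1},…,n_{j,D},1],…,[n_J,0])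 / pEPPF_D^{(n)}(n₁,…,n_J). -/
open MeasureTheory ProbabilityTheory
open scoped ENNReal

namespace MSSP

variable {Ω : Type*} [MeasurableSpace Ω] {𝕏 : Type*} [MeasurableSpace 𝕏]

/-- The partially exchangeable partition probability function of a vector `P` of random
probability measures, for group sizes `I` and the partition of the labels
`Σ j, Fin (I j)` encoded by the block-assignment map `c`: it is the expected probability, under
the conditional product law of the sample, that the observations are equal exactly according
to the blocks of `c` (i.e. `E[∫_{𝕏^D_*} ∏_d ∏_j P_j(dx_d)^{n_{j,d}}]`). -/
noncomputable def pEPPF {J : ℕ} (Pr : Measure Ω) (P : Fin J → Ω → Measure 𝕏)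
    {I : Fin J → ℕ} {D : ℕ} (c : (Σ j, Fin (I j)) → Fin D) : ℝ≥0∞ :=
  ∫⁻ ω, Measure.pi (fun l : Σ j, Fin (I j) => P l.1 ω)
      {x | ∀ a b : Σ j, Fin (I j), x a = x b ↔ c a = c b} ∂Pr

/-- Extension of a block assignment `c` after one more observation in group `j`, the new
observation being assigned to the existing block `l`. -/
def extOld {J : ℕ} (I : Fin J → ℕ) (j : Fin J) {D : ℕ}
    (c : (Σ j', Fin (I j')) → Fin D) (l : Fin D) :
    (Σ j', Fin (Function.update I j (I j + 1) j')) → Fin D :=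
  fun p => if h : (p.2 : ℕ) < I p.1 then c ⟨p.1, ⟨p.2, h⟩⟩ else l

/-- Extension of a block assignment `c` after one more observation in group `j`, the new
observation being assigned to a brand new block. -/
def extNew {J : ℕ} (I : Fin J → ℕ) (j : Fin J) {D : ℕ}
    (c : (Σ j', Fin (I j')) → Fin D) :
    (Σ j', Fin (Function.update I j (I j + 1) j')) → Fin (D + 1) :=
  fun p => if h : (p.2 : ℕ) < I p.1 then Fin.castSucc (c ⟨p.1, ⟨p.2, h⟩⟩) else Fin.last D

/-- The event that the first `I j` observations of each group are equal exactly according to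
the block assignment `c`. -/
def tieEvent {J : ℕ} {I : Fin J → ℕ} {D : ℕ} (X : Fin J → ℕ → Ω → 𝕏)
    (c : (Σ j', Fin (I j')) → Fin D) : Set Ω :=
  {ω | ∀ a b : Σ j', Fin (I j'), (X a.1 a.2.val ω = X b.1 b.2.val ω ↔ c a = c b)}

/-!
Given that the first observations tie according to `c`, the next observation of group `j` joins
block `l` (resp. opens a new block) exactly when all observations tie according to the extended
assignment `extOld I j c l` (resp. `extNew I j c`). Both conditional probabilities are therefore
ratios of probabilities of tie events, and the probability of a tie event is its pEPPF, since the
law of finitely many distinct sample entries is the `Pr`-mixture of the product of the random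
measures.
-/

section Ties

variable {κ κ' α β γ : Type*}

def SameTies (x : κ → α) (c : κ → β) : Prop :=
  ∀ a b, x a = x b ↔ c a = c b

lemma sameTies_comp_equiv_iff (e : κ' ≃ κ) {x : κ → α} {c : κ → β} :
    SameTies (x ∘ e) (c ∘ e) ↔ SameTies x c := by
  simp only [SameTies, Function.comp_apply, e.surjective.forall]

lemma sameTies_comp_left_iff {x : κ → α} {c : κ → β} {f : β → γ} (hf : f.Injective) :
    SameTies x (f ∘ c) ↔ SameTies x c := by
  simp only [SameTies, Function.comp_apply, hf.eq_iff]

lemma sameTies_elim'_iff {x : κ → α} {c : κ → β} {y : α} (a₀ : κ) :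
    SameTies (Option.elim' y x) (Option.elim' (c a₀) c) ↔ SameTies x c ∧ y = x a₀ := by
  refine ⟨fun h => ⟨fun a b => h (some a) (some b), (h none (some a₀)).2 rfl⟩, ?_⟩
  rintro ⟨h, rfl⟩ (_ | a) (_ | b)
  · simp
  · exact h a₀ b
  · exact h a a₀
  · exact h a b

lemma sameTies_elim'_of_notMem_range_iff {x : κ → α} {c : κ → β} {y : α} {b₀ : β}
    (hb₀ : b₀ ∉ Set.range c) :
    SameTies (Option.elim' y x) (Option.elim' b₀ c) ↔ SameTies x c ∧ ∀ a, y ≠ x a := by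
  refine ⟨fun h => ⟨fun a b => h (some a) (some b),
    fun a hya => hb₀ ⟨a, ((h none (some a)).1 hya).symm⟩⟩, ?_⟩
  rintro ⟨h, hy⟩ (_ | a) (_ | b)
  · simp
  · exact iff_of_false (hy b) fun hb => hb₀ ⟨b, hb.symm⟩
  · exact iff_of_false (hy a).symm fun ha => hb₀ ⟨a, ha⟩
  · exact h a b

lemma SameTies.forall_ne_iff {x : κ → α} {c : κ → β} (h : SameTies x c) {r : β → κ}
    (hr : ∀ d, c (r d) = d) {y : α} : (∀ a, y ≠ x a) ↔ ∀ d, y ≠ x (r d) :=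
  ⟨fun hy d => hy (r d), fun hy a => (h a (r (c a))).2 (hr (c a)).symm ▸ hy (c a)⟩

lemma measurableSet_sameTies [MeasurableSpace α] [MeasurableEq α] [Countable κ] (c : κ → β) :
    MeasurableSet {x : κ → α | SameTies x c} :=
  measurableSet_setOfPred.2 <| Measurable.forall fun a => Measurable.forall fun b =>
    ((measurable_pi_apply a).eq (measurable_pi_apply b)).iff measurable_const

end Ties

section Extension

variable {J : ℕ} (I : Fin J → ℕ) (j : Fin J)

lemma le_update_succ_self (j' : Fin J) : I j' ≤ Function.update I j (I j + 1) j' := by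
  rcases eq_or_ne j' j with rfl | h
  · simp
  · simp [h]

/-- `none` is the label of the new observation in group `j`. -/
def optionSigmaEquiv :
    Option (Σ j', Fin (I j')) ≃ Σ j', Fin (Function.update I j (I j + 1) j') where
  toFun := Option.elim' ⟨j, I j, by simp⟩
    fun a => ⟨a.1, a.2, a.2.2.trans_le (le_update_succ_self I j a.1)⟩
  invFun p := if h : (p.2 : ℕ) < I p.1 then some ⟨p.1, p.2, h⟩ else none
  left_inv o := by cases o <;> simp
  right_inv := by
    rintro ⟨j', i⟩
    by_cases h : (i : ℕ) < I j'
    · simp [h]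
    · obtain rfl : j' = j := by
        by_contra hj
        exact h (by simpa [Function.update_of_ne hj] using i.2)
      have hi : (i : ℕ) = I j' := le_antisymm (by simpa [Nat.lt_succ_iff] using i.2) (not_lt.1 h)
      simp only [h, dite_false, Option.elim']
      exact Sigma.ext rfl (heq_of_eq (Fin.ext hi.symm))

variable {I j} {D : ℕ} (c : (Σ j', Fin (I j')) → Fin D)

lemma extOld_comp_optionSigmaEquiv (l : Fin D) :
    extOld I j c l ∘ optionSigmaEquiv I j = Option.elim' l c := by
  funext o
  cases o <;> simp [extOld, optionSigmaEquiv]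

lemma extNew_comp_optionSigmaEquiv :
    extNew I j c ∘ optionSigmaEquiv I j = Option.elim' (Fin.last D) (Fin.castSucc ∘ c) := by
  funext o
  cases o <;> simp [extNew, optionSigmaEquiv]

variable {c} {Ω 𝕏 : Type*} (X : Fin J → ℕ → Ω → 𝕏)

lemma mem_tieEvent_update_iff {D' : ℕ}
    {c' : (Σ j', Fin (Function.update I j (I j + 1) j')) → Fin D'} (ω : Ω) : ω ∈ tieEvent X c' ↔
      SameTies (Option.elim' (X j (I j) ω) fun a => X a.1 a.2 ω) (c' ∘ optionSigmaEquiv I j) := by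
  have : (fun p : Σ j', Fin (Function.update I j (I j + 1) j') => X p.1 p.2 ω) ∘
      optionSigmaEquiv I j = Option.elim' (X j (I j) ω) fun a => X a.1 a.2 ω := by
    funext o
    cases o <;> rfl
  rw [← this, sameTies_comp_equiv_iff]
  rfl

lemma tieEvent_extOld {a₀ : Σ j', Fin (I j')} {l : Fin D} (ha₀ : c a₀ = l) :
    tieEvent X (extOld I j c l) = tieEvent X c ∩ {ω | X j (I j) ω = X a₀.1 a₀.2 ω} := by
  ext ω
  rw [mem_tieEvent_update_iff, extOld_comp_optionSigmaEquiv, ← ha₀, sameTies_elim'_iff]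
  rfl

lemma tieEvent_extNew {r : Fin D → Σ j', Fin (I j')} (hr : ∀ d, c (r d) = d) :
    tieEvent X (extNew I j c) =
      tieEvent X c ∩ {ω | ∀ d, X j (I j) ω ≠ X (r d).1 (r d).2 ω} := by
  ext ω
  have hfresh : Fin.last D ∉ Set.range (Fin.castSucc ∘ c) :=
    fun ⟨a, ha⟩ => (Fin.castSucc_lt_last (c a)).ne ha
  rw [mem_tieEvent_update_iff, extNew_comp_optionSigmaEquiv,
    sameTies_elim'_of_notMem_range_iff hfresh, sameTies_comp_left_iff (Fin.castSucc_injective D)]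
  exact and_congr_right fun h => h.forall_ne_iff hr

end Extension

section Law

lemma measurable_measure_pi {κ : Type*} [Fintype κ] {ν : κ → Ω → Measure 𝕏}
    [∀ k ω, IsProbabilityMeasure (ν k ω)] (hν : ∀ k, Measurable (ν k)) :
    Measurable fun ω => Measure.pi fun k => ν k ω := by
  refine .measure_of_isPiSystem_of_isProbabilityMeasure generateFrom_pi.symm isPiSystem_pi ?_
  rintro _ ⟨A, hA, rfl⟩
  simp_rw [Measure.pi_pi]
  exact Finset.measurable_prod _ fun k _ => Measure.measurable_coe (hA k trivial) |>.comp (hν k)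

variable {ι : Type*} {Pr : Measure Ω} {P : ι → Ω → Measure 𝕏} {X : ι → ℕ → Ω → 𝕏}

lemma IsSample.measure_forall_mem (hX : IsSample Pr P X) {κ : Type*} [Fintype κ]
    {f : κ → ι × ℕ} (hf : f.Injective) {A : κ → Set 𝕏} (hA : ∀ a, MeasurableSet (A a)) :
    Pr {ω | ∀ a, X (f a).1 (f a).2 ω ∈ A a} = ∫⁻ ω, ∏ a, P (f a).1 ω (A a) ∂Pr := by
  classical
  set A' := Function.extend f A fun _ => Set.univ
  have hA' : ∀ a, A' (f a) = A a := hf.extend_apply _ _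
  have := hX.2 (Finset.univ.map ⟨f, hf⟩) A' (by simp [hA', hA])
  simpa [hA'] using this

lemma IsSample.map_eq_bind (hX : IsSample Pr P X) [IsFiniteMeasure Pr]
    [∀ i ω, IsProbabilityMeasure (P i ω)] (hP : ∀ i, Measurable (P i))
    {κ : Type*} [Fintype κ] {f : κ → ι × ℕ} (hf : f.Injective) :
    Pr.map (fun ω a => X (f a).1 (f a).2 ω) =
      Pr.bind fun ω => Measure.pi fun a => P (f a).1 ω := by
  have hbox : ∀ A : κ → Set 𝕏, (∀ a, MeasurableSet (A a)) →
      Pr.map (fun ω a => X (f a).1 (f a).2 ω) (Set.univ.pi A) =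
        Pr.bind (fun ω => Measure.pi fun a => P (f a).1 ω) (Set.univ.pi A) := by
    intro A hA
    rw [Measure.map_apply (measurable_pi_lambda _ fun a => hX.1 _ _) (.univ_pi hA),
      Measure.bind_apply (.univ_pi hA) (measurable_measure_pi fun a => hP _).aemeasurable]
    simp_rw [Measure.pi_pi, ← hX.measure_forall_mem hf hA, Set.preimage, Set.mem_univ_pi]
  refine ext_of_generate_finite _ generateFrom_pi.symm isPiSystem_pi ?_ ?_
  · rintro _ ⟨A, hA, rfl⟩
    exact hbox A fun a => hA a trivial
  · simpa using hbox (fun _ => Set.univ) fun _ => .univ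

end Law

lemma IsSample.measure_tieEvent [MeasurableEq 𝕏] {J : ℕ} {Pr : Measure Ω} [IsFiniteMeasure Pr]
    {P : Fin J → Ω → Measure 𝕏} [∀ j ω, IsProbabilityMeasure (P j ω)]
    (hP : ∀ j, Measurable (P j)) {X : Fin J → ℕ → Ω → 𝕏} (hX : IsSample Pr P X)
    {I : Fin J → ℕ} {D : ℕ} (c : (Σ j, Fin (I j)) → Fin D) :
    Pr (tieEvent X c) = pEPPF Pr P c := by
  have hf : Function.Injective fun a : Σ j, Fin (I j) => (a.1, (a.2 : ℕ)) := by
    rintro ⟨j, i⟩ ⟨j', i'⟩ h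
    obtain ⟨rfl, h⟩ := Prod.mk.inj h
    exact Sigma.ext rfl (heq_of_eq (Fin.ext h))
  have := congrArg (· {x | SameTies x c}) (hX.map_eq_bind hP hf)
  rwa [Measure.map_apply (measurable_pi_lambda _ fun a => hX.1 _ _) (measurableSet_sameTies c),
    Measure.bind_apply (measurableSet_sameTies c)
      (measurable_measure_pi fun a => hP _).aemeasurable] at this

theorem mSSP_predictive_mgCRP_general {Ω : Type*} [MeasurableSpace Ω] {𝕏 : Type*} [MeasurableSpace 𝕏]
    [StandardBorelSpace 𝕏] {J : ℕ}
    (Pr : Measure Ω) [IsProbabilityMeasure Pr]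
    (P₀ : Measure 𝕏)
    (P : Fin J → Ω → Measure 𝕏) (hP : IsMSSP Pr P₀ P)
    (X : Fin J → ℕ → Ω → 𝕏) (hX : IsSample Pr P X)
    (I : Fin J → ℕ) (D : ℕ) (c : (Σ j', Fin (I j')) → Fin D)
    (r : Fin D → Σ j', Fin (I j')) (hr : ∀ d, c (r d) = d)
    (j : Fin J) :
    (∀ l : Fin D,
      Pr[|tieEvent X c] {ω | X j (I j) ω = X (r l).1 (r l).2.val ω}
        = pEPPF Pr P (extOld I j c l) / pEPPF Pr P c) ∧
    Pr[|tieEvent X c] {ω | ∀ d : Fin D, X j (I j) ω ≠ X (r d).1 (r d).2.val ω}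
      = pEPPF Pr P (extNew I j c) / pEPPF Pr P c := by
  obtain ⟨_, _, hM⟩ := hP
  have := hM.probP
  have hPmeas (j : Fin J) : Measurable (P j) := Measure.measurable_of_measurable_coe _ (hM.measP j)
  have hE : MeasurableSet (tieEvent X c) :=
    measurable_pi_lambda _ (fun a => hX.1 _ _) (measurableSet_sameTies c)
  refine ⟨fun l => ?_, ?_⟩
  · rw [cond_apply hE, ← tieEvent_extOld X (hr l), hX.measure_tieEvent hPmeas,
      hX.measure_tieEvent hPmeas, ENNReal.div_eq_inv_mul]
  · rw [cond_apply hE, ← tieEvent_extNew X hr, hX.measure_tieEvent hPmeas,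
      hX.measure_tieEvent hPmeas, ENNReal.div_eq_inv_mul]

/-- The multivariate generalized Chinese restaurant process: for a sample from
a multivariate species sampling process, conditionally on the observed partition configuration
(given by a surjective block assignment `c` with block representatives `r`), the next
observation from group `j` coincides with the `l`-th distinct observed value with probability
given by the ratio of the suitably updated pEPPF to the current pEPPF, and it is a new value
with probability the corresponding ratio where the updated pEPPF gains a new block. -/
theorem mSSP_predictive_mgCRP {Ω : Type*} [MeasurableSpace Ω] {𝕏 : Type*} [MeasurableSpace 𝕏]
    [StandardBorelSpace 𝕏] {J : ℕ}
    (Pr : Measure Ω) [IsProbabilityMeasure Pr]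
    (P₀ : Measure 𝕏) [IsProbabilityMeasure P₀] [NullSingletonClass P₀]
    (P : Fin J → Ω → Measure 𝕏) (hP : IsMSSP Pr P₀ P)
    (X : Fin J → ℕ → Ω → 𝕏) (hX : IsSample Pr P X)
    (I : Fin J → ℕ) (D : ℕ) (c : (Σ j', Fin (I j')) → Fin D)
    (hc : Function.Surjective c)
    (r : Fin D → Σ j', Fin (I j')) (hr : ∀ d, c (r d) = d)
    (hpos : Pr (tieEvent X c) ≠ 0)
    (j : Fin J) :
    (∀ l : Fin D,
      Pr[|tieEvent X c] {ω | X j (I j) ω = X (r l).1 (r l).2.val ω}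
        = pEPPF Pr P (extOld I j c l) / pEPPF Pr P c) ∧
    Pr[|tieEvent X c] {ω | ∀ d : Fin D, X j (I j) ω ≠ X (r d).1 (r d).2.val ω}
      = pEPPF Pr P (extNew I j c) / pEPPF Pr P c :=
  mSSP_predictive_mgCRP_general Pr P₀ P hP X hX I D c r hr j

end MSSP
end
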